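/- arXiv:1309.7424 — 4 statements merged into one kernel-verified Lean document; each statement's English description precedes it below -/
import Mathlib

section
/- Let s be a nonzero real number. Then s belongs to the subring ℤ[1/s] of ℝ if and only if s is an algebraic integer (i.e., s is a root of a monic polynomial with integer coefficients). -/
/-!
If `x = p(1/x)` with `deg p = n`, multiplying by `x ^ n` shows that `x` is a root of the monic
polynomial `X ^ (n + 1) - reflect n p`. Conversely, if `p` is monic with `p(x) = 0`, then the
reversed polynomial `q` has constant term `1` and `q(1/x) = 0`, so `1 = -(1/x) · (q / X)(1/x)`
and hence `x = -(q / X)(1/x)`.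
-/

open Polynomial

section InvOf

variable {R A : Type*} [CommRing R] [CommRing A] [Algebra R A] {x : A} [Invertible x]

theorem aeval_reflect_mul_invOf_pow (p : R[X]) :
    aeval x (reflect p.natDegree p) * ⅟x ^ p.natDegree = aeval (⅟x) p := by
  let : Invertible (⅟x) := invertibleInvOf
  simpa only [invOf_invOf, ← aeval_def] using
    eval₂_reflect_mul_pow (algebraMap R A) (⅟x) p.natDegree p le_rfl

theorem IsIntegral.of_mem_adjoin_invOf (hx : x ∈ Algebra.adjoin R {⅟x}) : IsIntegral R x := by
  rw [Algebra.adjoin_singleton_eq_range_aeval] at hx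
  obtain ⟨p, hp⟩ := hx
  set n := p.natDegree
  have hreflect : aeval x (reflect n p) = x ^ (n + 1) := by
    have h := aeval_reflect_mul_invOf_pow (x := x) p
    rw [show aeval (⅟x) p = x from hp] at h
    calc aeval x (reflect n p)
        = aeval x (reflect n p) * ⅟x ^ n * x ^ n := by
          rw [mul_assoc, ← mul_pow, invOf_mul_self, one_pow, mul_one]
      _ = x ^ (n + 1) := by rw [h, pow_succ']
  refine ⟨X ^ (n + 1) - reflect n p, monic_X_pow_sub ?_, ?_⟩
  · have hdeg : (reflect n p).natDegree ≤ n := natDegree_reflect_le.trans (max_self n).le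
    exact (degree_le_of_natDegree_le hdeg).trans_lt (by exact_mod_cast n.lt_succ_self)
  · rw [← aeval_def, map_sub, aeval_X_pow, hreflect, sub_self]

theorem IsIntegral.mem_adjoin_invOf (hx : IsIntegral R x) : x ∈ Algebra.adjoin R {⅟x} := by
  obtain ⟨p, hmonic, hroot⟩ := hx
  set q := reverse p
  have hq : aeval (⅟x) q = 0 := by
    rw [aeval_def, eval₂_reverse_eq_zero_iff, hroot]
  have hq0 : q.coeff 0 = 1 := by rw [coeff_zero_reverse, hmonic.leadingCoeff]
  have hsplit : ⅟x * aeval (⅟x) q.divX + 1 = 0 := by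
    simpa only [map_add, map_mul, aeval_X, aeval_C, hq0, map_one, hq] using
      congrArg (aeval (⅟x)) (X_mul_divX_add q)
  rw [Algebra.adjoin_singleton_eq_range_aeval]
  refine ⟨-q.divX, ?_⟩
  calc aeval (⅟x) (-q.divX) = -aeval (⅟x) q.divX := map_neg _ _
    _ = x - x * (⅟x * aeval (⅟x) q.divX + 1) + (x * ⅟x - 1) * aeval (⅟x) q.divX := by ring
    _ = x := by rw [hsplit, mul_invOf_self]; ring

theorem mem_adjoin_invOf_iff_isIntegral : x ∈ Algebra.adjoin R {⅟x} ↔ IsIntegral R x :=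
  ⟨IsIntegral.of_mem_adjoin_invOf, IsIntegral.mem_adjoin_invOf⟩

end InvOf

theorem stmt_4 (s : ℝ) (hs : s ≠ 0) :
    s ∈ Algebra.adjoin ℤ ({s⁻¹} : Set ℝ) ↔ IsIntegral ℤ s := by
  let : Invertible s := invertibleOfNonzero hs
  rw [← invOf_eq_inv]
  exact mem_adjoin_invOf_iff_isIntegral
end

section
/- Let P ∈ ℤ[x] be a polynomial of degree k with leading coefficient a_k. For every positive integer N and every integer i with 0 ≤ i < k, the coefficient of x^{kN − i} in P^N is divisible by a_k^{N − i}. -/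
/-!
Reversing `P` turns the top coefficients of `P ^ N` into the bottom coefficients of
`(reverse P) ^ N`, and the constant term of `reverse P` is `a_k`. Writing a polynomial as
`R = X * S + C c`, the binomial expansion of `R ^ N` shows that its coefficient of `X ^ i`
only receives contributions from the terms `(X * S) ^ j * C c ^ (N - j)` with `j ≤ i`,
all of which are divisible by `c ^ (N - i)`.
-/

namespace Polynomial

theorem coeff_zero_pow_sub_dvd_coeff_pow {R : Type*} [CommSemiring R] (p : R[X]) (n i : ℕ) :
    p.coeff 0 ^ (n - i) ∣ (p ^ n).coeff i := by
  conv_rhs => rw [← X_mul_divX_add p, add_pow, finsetSum_coeff]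
  refine Finset.dvd_sum fun j _ => ?_
  rcases le_or_gt j i with hji | hij
  · refine (C_dvd_iff_dvd_coeff _ _).1 (dvd_mul_of_dvd_left (dvd_mul_of_dvd_right ?_ _) _) i
    rw [C_pow]
    exact pow_dvd_pow _ (by omega)
  · have hX : X ^ j ∣ (X * p.divX) ^ j * C (p.coeff 0) ^ (n - j) * (n.choose j : R[X]) :=
      dvd_mul_of_dvd_left (dvd_mul_of_dvd_left (mul_pow X p.divX j ▸ dvd_mul_right _ _) _) _
    rw [X_pow_dvd_iff.1 hX i hij]
    exact dvd_zero _

theorem reverse_pow {R : Type*} [Semiring R] [NoZeroDivisors R] (p : R[X]) (n : ℕ) :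
    (p ^ n).reverse = p.reverse ^ n := by
  induction n with
  | zero => simp [reverse, reflect_one]
  | succ n ih => rw [pow_succ, reverse_mul_of_domain, ih, pow_succ]

theorem leadingCoeff_pow_sub_dvd_coeff_pow {R : Type*} [CommSemiring R] [NoZeroDivisors R]
    (p : R[X]) {n i : ℕ} (hi : i ≤ p.natDegree * n) :
    p.leadingCoeff ^ (n - i) ∣ (p ^ n).coeff (p.natDegree * n - i) := by
  have h := coeff_zero_pow_sub_dvd_coeff_pow p.reverse n i
  rwa [coeff_zero_reverse, ← reverse_pow, coeff_reverse, natDegree_pow, mul_comm,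
    revAt_le hi] at h

end Polynomial

theorem stmt_7 (P : Polynomial ℤ) (N : ℕ) (hN : 0 < N) (i : ℕ)
    (hi : i < P.natDegree) :
    P.leadingCoeff ^ (N - i) ∣ (P ^ N).coeff (P.natDegree * N - i) :=
  P.leadingCoeff_pow_sub_dvd_coeff_pow (hi.le.trans (Nat.le_mul_of_pos_right _ hN))
end

section
/- Let S ⊆ {0, 1, …, k} be a finite set of nonnegative integers containing 0 and k, with gcd(S \ {0}) = 1 (i.e., the greatest common divisor of the nonzero elements of S is 1). Then there exists a positive integer M such that for every positive integer N and every integer i with M < i < kN − M, the integer i can be written as a sum of exactly N elements of S (with repetition allowed). -/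
/-!
Let `T = S \ {0}`. Since `gcd T = 1`, every `m ≥ B` is a sum of elements of `T` (Frobenius),
using at most `m` summands because they are positive. Given `i` in the middle range, write
`i = r + k t` with `B ≤ r < B + k`: represent `r` by fewer than `B + k` elements of `T`, add `t`
copies of `k`, and pad with zeros up to `N` summands; the margin `M` guarantees room for this.
-/

namespace Nat

lemma setGcd_coe_finset (s : Finset ℕ) : setGcd (s : Set ℕ) = s.gcd id :=
  dvd_antisymm (Finset.dvd_gcd fun _ hm ↦ setGcd_dvd_of_mem hm)
    (dvd_setGcd_iff.mpr fun _ hm ↦ Finset.gcd_dvd hm)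

theorem exists_list_sum_eq_of_ge {s : Set ℕ} (hs : setGcd s = 1) (hpos : ∀ x ∈ s, 0 < x) :
    ∃ B, ∀ m ≥ B, ∃ l : List ℕ, (∀ x ∈ l, x ∈ s) ∧ l.length ≤ m ∧ l.sum = m := by
  obtain ⟨B, hB⟩ := exists_mem_closure_of_ge s
  refine ⟨B, fun m hm ↦ ?_⟩
  obtain ⟨l, hls, rfl⟩ := AddSubmonoid.exists_list_of_mem_closure (hB m hm (hs ▸ one_dvd m))
  exact ⟨l, hls, List.length_le_sum_of_one_le l fun x hx ↦ hpos x (hls x hx), rfl⟩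

end Nat

lemma exists_fin_sum_eq_list_sum {S : Set ℕ} {N : ℕ} {l : List ℕ} (hl : ∀ x ∈ l, x ∈ S)
    (hlen : l.length = N) : ∃ f : Fin N → ℕ, (∀ j, f j ∈ S) ∧ ∑ j, f j = l.sum := by
  subst hlen
  exact ⟨fun j ↦ l[j], fun j ↦ hl _ (List.getElem_mem _), Fin.sum_univ_getElem l⟩

lemma exists_fin_sum_eq_list_sum_of_length_le {S : Set ℕ} {N : ℕ} {l : List ℕ} (h0 : 0 ∈ S)
    (hl : ∀ x ∈ l, x ∈ S) (hlen : l.length ≤ N) :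
    ∃ f : Fin N → ℕ, (∀ j, f j ∈ S) ∧ ∑ j, f j = l.sum := by
  have hpad : ∀ x ∈ l ++ List.replicate (N - l.length) 0, x ∈ S := by
    simp only [List.mem_append, List.mem_replicate]
    rintro x (hx | ⟨-, rfl⟩)
    exacts [hl x hx, h0]
  simpa using exists_fin_sum_eq_list_sum hpad
    (by simp only [List.length_append, List.length_replicate]; omega)

theorem stmt_12_general (k : ℕ) (S : Finset ℕ) (h0 : 0 ∈ S) (hk : k ∈ S)
    (hgcd : (S.erase 0).gcd id = 1) :
    ∃ M : ℕ, 0 < M ∧ ∀ N : ℕ, 0 < N → ∀ i : ℕ, M < i → i < k * N - M →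
      ∃ f : Fin N → ℕ, (∀ j, f j ∈ S) ∧ ∑ j, f j = i := by
  obtain ⟨B, hB⟩ := Nat.exists_list_sum_eq_of_ge (s := ↑(S.erase 0))
    (by rwa [Nat.setGcd_coe_finset]) fun x hx ↦ Nat.pos_of_ne_zero (Finset.ne_of_mem_erase hx)
  refine ⟨B + k * (B + k) + 1, by omega, fun N _ i hMi hiN ↦ ?_⟩
  have hk0 : 0 < k := Nat.pos_of_ne_zero (by rintro rfl; simp at hiN)
  set t := (i - B) / k
  have hdiv : k * t + (i - B) % k = i - B := Nat.div_add_mod (i - B) k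
  have hmod : (i - B) % k < k := Nat.mod_lt _ hk0
  have ht : t + (B + k) < N := by
    have : k * t + k * (B + k) < k * N := by omega
    rw [← mul_add] at this
    exact Nat.lt_of_mul_lt_mul_left this
  obtain ⟨l, hlS, hlen, hsum⟩ := hB (B + (i - B) % k) le_self_add
  have hl : ∀ x ∈ l ++ List.replicate t k, x ∈ (S : Set ℕ) := by
    simp only [List.mem_append, List.mem_replicate]
    rintro x (hx | ⟨-, rfl⟩)
    exacts [Finset.mem_of_mem_erase (hlS x hx), hk]
  obtain ⟨f, hfS, hf⟩ := exists_fin_sum_eq_list_sum_of_length_le (N := N) h0 hl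
    (by simp only [List.length_append, List.length_replicate]; omega)
  refine ⟨f, hfS, ?_⟩
  rw [hf, List.sum_append, List.sum_replicate, hsum, smul_eq_mul, Nat.mul_comm t k]
  omega

theorem stmt_12 (k : ℕ) (S : Finset ℕ) (h0 : 0 ∈ S) (hk : k ∈ S)
    (hbound : ∀ s ∈ S, s ≤ k) (hgcd : (S.erase 0).gcd id = 1) :
    ∃ M : ℕ, 0 < M ∧ ∀ N : ℕ, 0 < N → ∀ i : ℕ, M < i → i < k * N - M →
      ∃ f : Fin N → ℕ, (∀ j, f j ∈ S) ∧ ∑ j, f j = i :=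
  stmt_12_general k S h0 hk hgcd
end

section
/- Let r be a positive real number. Then both 1 + r and 1 + r⁻¹ belong to the subring ℤ[1/(1+r)] of ℝ if and only if r is an algebraic unit, i.e., both r and r⁻¹ are algebraic integers. -/
/-!
If `s * x = 1`, then `x ∈ R[s]` exactly when `x` is integral over `R`: an equation
`x = g(s)` becomes a monic equation for `x` after multiplying by a power of `x`, and
conversely a monic equation for `x` multiplied by a power of `s` expresses `x` in terms of `s`.
Take `s = 1/(1+r)`; then `1 - s = 1/(1+1/r)` generates the same ring, and `1 + r`, `1 + 1/r`
are integral exactly when `r`, `1/r` are.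
-/

open Polynomial Algebra

variable {R A : Type*} [CommRing R] [CommRing A] [Algebra R A]

theorem isIntegral_one_add_iff {x : A} : IsIntegral R (1 + x) ↔ IsIntegral R x :=
  ⟨fun h ↦ by simpa using h.sub isIntegral_one, isIntegral_one.add⟩

theorem adjoin_singleton_one_sub (s : A) : adjoin R {1 - s} = adjoin R {s} := by
  refine le_antisymm (adjoin_singleton_le ?_) (adjoin_singleton_le ?_)
  · exact sub_mem (one_mem _) (self_mem_adjoin_singleton R s)
  · simpa using sub_mem (one_mem _) (self_mem_adjoin_singleton R (1 - s))

/- If `p` is monic of degree `N` with `p(x) = 0`, the reversed polynomial `q = X ^ N p(1/X)` has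
constant term `1` and vanishes at `s = 1/x`; so `s g(s) + 1 = 0` for `g = q.divX`,
whence `x = -g(s)`. -/
theorem IsIntegral.mem_adjoin_singleton_of_mul_eq_one {s x : A} (hsx : s * x = 1)
    (hx : IsIntegral R x) : x ∈ adjoin R {s} := by
  obtain ⟨p, hmonic, hpx⟩ := hx
  let _ : Invertible x := ⟨s, hsx, mul_comm s x ▸ hsx⟩
  set q := reflect p.natDegree p
  have hqs : aeval s q = 0 := by
    have h : eval₂ (algebraMap R A) s q * x ^ p.natDegree = 0 :=
      (eval₂_reflect_mul_pow (algebraMap R A) x p.natDegree p le_rfl).trans hpx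
    calc aeval s q = aeval s q * x ^ p.natDegree * s ^ p.natDegree := by
          rw [mul_assoc, ← mul_pow, mul_comm x, hsx, one_pow, mul_one]
      _ = 0 := by rw [aeval_def, h, zero_mul]
  have hq0 : q.coeff 0 = 1 := by
    rw [coeff_reflect, revAt_le (Nat.zero_le _), Nat.sub_zero, ← leadingCoeff,
      hmonic.leadingCoeff]
  have hsg : s * aeval s q.divX + 1 = 0 := by
    have h := congrArg (aeval s) (X_mul_divX_add q)
    rwa [map_add, map_mul, aeval_X, aeval_C, hq0, map_one, hqs] at h
  have hx_eq : x = aeval s (-q.divX) := by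
    rw [map_neg]
    linear_combination x * hsg - aeval s q.divX * hsx
  exact hx_eq ▸ aeval_mem_adjoin_singleton R s

theorem isIntegral_of_mem_adjoin_singleton_of_mul_eq_one {s x : A} (hsx : s * x = 1)
    (hx : x ∈ adjoin R {s}) : IsIntegral R x :=
  isIntegral_of_isIntegral_adjoin_of_mul_eq_one x s hsx <|
    isIntegral_algebraMap (x := (⟨x, hx⟩ : adjoin R {s}))

theorem mem_adjoin_singleton_iff_isIntegral_of_mul_eq_one {s x : A} (hsx : s * x = 1) :
    x ∈ adjoin R {s} ↔ IsIntegral R x :=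
  ⟨isIntegral_of_mem_adjoin_singleton_of_mul_eq_one hsx,
    (IsIntegral.mem_adjoin_singleton_of_mul_eq_one hsx ·)⟩

theorem stmt_15 (r : ℝ) (hr : 0 < r) :
    ((1 + r ∈ Algebra.adjoin ℤ ({(1 + r)⁻¹} : Set ℝ)) ∧
      (1 + r⁻¹ ∈ Algebra.adjoin ℤ ({(1 + r)⁻¹} : Set ℝ))) ↔
      (IsIntegral ℤ r ∧ IsIntegral ℤ r⁻¹) := by
  have h₁ : (1 + r)⁻¹ * (1 + r) = 1 := inv_mul_cancel₀ (by positivity)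
  have h₂ : (1 - (1 + r)⁻¹) * (1 + r⁻¹) = 1 := by field_simp; ring
  rw [mem_adjoin_singleton_iff_isIntegral_of_mul_eq_one h₁,
    ← adjoin_singleton_one_sub (R := ℤ) (1 + r)⁻¹,
    mem_adjoin_singleton_iff_isIntegral_of_mul_eq_one h₂, isIntegral_one_add_iff,
    isIntegral_one_add_iff]
end
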